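/- (Main synchronization theorem, ODE form) Suppose v_i : ℝ → ℝ, i = 1,...,N, are differentiable and satisfy v_i'(t) = h_i(t) + k(v̄(t) - v_i(t)) on [0,T], with |h_i(t)| ≤ M, and the variance V(t) = (1/N)Σ_i(v_i(t) - v̄(t))² satisfies √(V(0)) ≤ W_0 with V(t) > 0 on [0,T]. Let ε > 0 and τ ∈ (0,T]. If k ≥ 4M/√ε and k > (1/τ) ln(2W_0/√ε), and W_0 ≥ 2M/k, and W(t) = √(V(t)) is C¹ on [0,T], then V(τ) < ε. -/

import Mathlib

/-!
The spread `W = √V` obeys `W' ≤ M - k W`: since deviations from the mean sum to zero, the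
coupling `k (v̄ - vᵢ)` contributes exactly `-k V` to `V' / 2`, while by Cauchy–Schwarz the forcing
contributes at most `M √V`. Grönwall gives `W τ ≤ W₀ e^{-kτ} + M / k`, and the two conditions on
`k` make these terms smaller than `√ε / 2` and `√ε / 4`.
-/

open Real Set Finset

noncomputable section EmpiricalStatistics

variable {ι : Type*} [Fintype ι]

def empiricalMean (x : ι → ℝ) : ℝ := (∑ i, x i) / Fintype.card ι

def empiricalVariance (x : ι → ℝ) : ℝ := empiricalMean fun i => (x i - empiricalMean x) ^ 2

theorem sum_sub_empiricalMean (x : ι → ℝ) : ∑ i, (x i - empiricalMean x) = 0 := by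
  rcases isEmpty_or_nonempty ι with hι | hι
  · simp
  simp only [sum_sub_distrib, sum_const, card_univ, nsmul_eq_mul, empiricalMean]
  field_simp
  ring

theorem empiricalMean_abs_le_sqrt (c : ι → ℝ) :
    empiricalMean (fun i => |c i|) ≤ √(empiricalMean fun i => c i ^ 2) := by
  apply Real.le_sqrt_of_sq_le
  simpa only [empiricalMean, sq_abs, card_univ] using
    sum_div_card_sq_le_sum_sq_div_card (s := univ) (f := fun i => |c i|)

theorem empiricalMean_mul_le_mul_sqrt {c h : ι → ℝ} {M : ℝ} (hM : 0 ≤ M) (hh : ∀ i, |h i| ≤ M) :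
    empiricalMean (fun i => c i * h i) ≤ M * √(empiricalMean fun i => c i ^ 2) := by
  calc empiricalMean (fun i => c i * h i)
      ≤ empiricalMean (fun i => M * |c i|) := by
        unfold empiricalMean
        gcongr with i
        calc c i * h i ≤ |c i| * |h i| := by rw [← abs_mul]; exact le_abs_self _
          _ ≤ M * |c i| := by rw [mul_comm]; gcongr; exact hh i
    _ = M * empiricalMean (fun i => |c i|) := by simp only [empiricalMean, ← mul_sum]; ring
    _ ≤ M * √(empiricalMean fun i => c i ^ 2) := by gcongr; exact empiricalMean_abs_le_sqrt c

theorem hasDerivAt_empiricalMean {v : ι → ℝ → ℝ} {v' : ι → ℝ} {t : ℝ}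
    (hv : ∀ i, HasDerivAt (v i) (v' i) t) :
    HasDerivAt (fun s => empiricalMean (v · s)) (empiricalMean v') t :=
  (HasDerivAt.fun_sum (u := univ) fun i _ => hv i).div_const _

theorem hasDerivAt_empiricalVariance {v : ι → ℝ → ℝ} {v' : ι → ℝ} {t : ℝ}
    (hv : ∀ i, HasDerivAt (v i) (v' i) t) :
    HasDerivAt (fun s => empiricalVariance (v · s))
      (2 * empiricalMean fun i => (v i t - empiricalMean (v · t)) * v' i) t := by
  have hm := hasDerivAt_empiricalMean hv
  refine ((HasDerivAt.fun_sum (u := univ) fun i _ => ((hv i).sub hm).fun_pow 2).div_const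
    (Fintype.card ι : ℝ)).congr_deriv ?_
  have hsum : ∑ i, ((2 : ℕ) : ℝ) * (v i t - empiricalMean (v · t)) ^ (2 - 1) *
      (v' i - empiricalMean v') = 2 * ∑ i, (v i t - empiricalMean (v · t)) * v' i -
        2 * empiricalMean v' * ∑ i, (v i t - empiricalMean (v · t)) := by
    simp only [mul_sum, ← sum_sub_distrib]
    exact sum_congr rfl fun i _ => by ring
  simp only [Pi.sub_apply]
  rw [hsum, sum_sub_empiricalMean, mul_zero, sub_zero, mul_div_assoc]
  rfl

theorem hasDerivAt_sqrt_empiricalVariance {v : ι → ℝ → ℝ} {v' : ι → ℝ} {t : ℝ}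
    (hv : ∀ i, HasDerivAt (v i) (v' i) t) (hpos : 0 < empiricalVariance (v · t)) :
    HasDerivAt (fun s => √(empiricalVariance (v · s)))
      ((empiricalMean fun i => (v i t - empiricalMean (v · t)) * v' i) /
        √(empiricalVariance (v · t))) t := by
  refine ((hasDerivAt_empiricalVariance hv).sqrt hpos.ne').congr_deriv ?_
  field_simp

theorem empiricalMean_mul_consensus_le (x h : ι → ℝ) {k M : ℝ} (hM : 0 ≤ M)
    (hh : ∀ i, |h i| ≤ M) :
    (empiricalMean fun i => (x i - empiricalMean x) * (h i + k * (empiricalMean x - x i))) ≤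
      M * √(empiricalVariance x) - k * empiricalVariance x := by
  have hsplit :
      (empiricalMean fun i => (x i - empiricalMean x) * (h i + k * (empiricalMean x - x i))) =
        (empiricalMean fun i => (x i - empiricalMean x) * h i) - k * empiricalVariance x := by
    simp only [empiricalVariance, empiricalMean, mul_div_assoc', ← sub_div, mul_sum,
      ← sum_sub_distrib]
    congr 1
    exact sum_congr rfl fun i _ => by ring
  rw [hsplit]
  gcongr
  exact empiricalMean_mul_le_mul_sqrt hM hh

theorem empiricalMean_mul_consensus_div_sqrt_le (x h : ι → ℝ) {k M : ℝ} (hM : 0 ≤ M)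
    (hh : ∀ i, |h i| ≤ M) (hpos : 0 < empiricalVariance x) :
    (empiricalMean fun i => (x i - empiricalMean x) * (h i + k * (empiricalMean x - x i))) /
      √(empiricalVariance x) ≤ -k * √(empiricalVariance x) + M := by
  rw [div_le_iff₀ (sqrt_pos.2 hpos)]
  linear_combination empiricalMean_mul_consensus_le x h (k := k) hM hh +
    k * mul_self_sqrt hpos.le

end EmpiricalStatistics

theorem le_mul_exp_neg_add_div_of_hasDerivAt {f f' : ℝ → ℝ} {k M W₀ τ : ℝ} (hk : 0 < k)
    (hM : 0 ≤ M) (hτ : 0 ≤ τ) (hf : ∀ t ∈ Icc 0 τ, HasDerivAt f (f' t) t)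
    (hf' : ∀ t ∈ Icc 0 τ, f' t ≤ -k * f t + M) (h0 : f 0 ≤ W₀) :
    f τ ≤ W₀ * exp (-k * τ) + M / k := by
  have hcont : ContinuousOn f (Icc 0 τ) := fun t ht => (hf t ht).continuousAt.continuousWithinAt
  have hgron := le_gronwallBound_of_liminf_deriv_right_le hcont
    (fun t ht _ hr => (hf t (Ico_subset_Icc_self ht)).hasDerivWithinAt.liminf_right_slope_le hr)
    h0 (fun t ht => hf' t (Ico_subset_Icc_self ht)) τ (right_mem_Icc.2 hτ)
  rw [sub_zero, gronwallBound_of_K_ne_0 (neg_ne_zero.2 hk.ne')] at hgron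
  have hdecay : M / -k * (exp (-k * τ) - 1) ≤ M / k := by
    rw [div_neg, neg_mul, ← mul_neg, neg_sub]
    exact mul_le_of_le_one_right (div_nonneg hM hk.le) (by linarith [exp_pos (-k * τ)])
  linarith

theorem mul_exp_neg_add_div_lt {k M W₀ τ δ : ℝ} (hk : 0 < k) (hτ : 0 < τ) (hW₀ : 0 < W₀)
    (hδ : 0 < δ) (hkM : k ≥ 4 * M / δ) (hkτ : k > (1 / τ) * log (2 * W₀ / δ)) :
    W₀ * exp (-k * τ) + M / k < δ := by
  have hM : M / k ≤ δ / 4 := by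
    rw [ge_iff_le, div_le_iff₀ hδ] at hkM
    rw [div_le_iff₀ hk]
    linarith
  have hlog : log (2 * W₀ / δ) < k * τ := by
    rwa [gt_iff_lt, one_div, inv_mul_lt_iff₀ hτ, mul_comm τ] at hkτ
  have hexp : exp (-k * τ) < δ / (2 * W₀) := by
    rw [neg_mul, ← inv_div, ← exp_log (by positivity : 0 < 2 * W₀ / δ), ← exp_neg]
    exact exp_lt_exp.2 (neg_lt_neg hlog)
  have hW : W₀ * exp (-k * τ) < δ / 2 :=
    calc W₀ * exp (-k * τ) < W₀ * (δ / (2 * W₀)) := by gcongr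
      _ = δ / 2 := by field_simp
  linarith

theorem stmt_13_general (N : ℕ) (T τ k M ε W₀ : ℝ)
    (hτ : τ ∈ Set.Ioc (0 : ℝ) T) (hk : 0 < k) (hM : 0 ≤ M)
    (hε : 0 < ε) (hW₀ : 0 < W₀)
    (v : Fin N → ℝ → ℝ) (h : Fin N → ℝ → ℝ)
    (hv : ∀ i, Differentiable ℝ (v i))
    (vbar : ℝ → ℝ) (hvbar : ∀ t, vbar t = (1 / (N : ℝ)) * ∑ j, v j t)
    (hode : ∀ i, ∀ t ∈ Set.Icc (0 : ℝ) T, deriv (v i) t = h i t + k * (vbar t - v i t))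
    (hb : ∀ i, ∀ t ∈ Set.Icc (0 : ℝ) T, |h i t| ≤ M)
    (V : ℝ → ℝ) (hV : ∀ t, V t = (1 / (N : ℝ)) * ∑ i, (v i t - vbar t) ^ 2)
    (hVpos : ∀ t ∈ Set.Icc (0 : ℝ) T, 0 < V t)
    (hV0 : Real.sqrt (V 0) ≤ W₀)
    (hk1 : k ≥ 4 * M / Real.sqrt ε)
    (hk2 : k > (1 / τ) * Real.log (2 * W₀ / Real.sqrt ε)) :
    V τ < ε := by
  obtain ⟨hτ0, hτT⟩ := hτ
  have hsub : Icc 0 τ ⊆ Icc 0 T := Icc_subset_Icc_right hτT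
  have hmean : ∀ t, vbar t = empiricalMean (v · t) := fun t => by
    rw [hvbar, empiricalMean, Fintype.card_fin, one_div_mul_eq_div]
  have hvar : ∀ t, V t = empiricalVariance (v · t) := fun t => by
    simp only [hV, hmean, empiricalVariance, empiricalMean, Fintype.card_fin, one_div_mul_eq_div]
  have hderiv : ∀ t ∈ Icc 0 T, ∀ i,
      HasDerivAt (v i) (h i t + k * (empiricalMean (v · t) - v i t)) t := fun t ht i => by
    rw [← hmean, ← hode i t ht]
    exact (hv i t).hasDerivAt
  simp only [hvar] at hV0 hVpos ⊢
  have hdecay : √(empiricalVariance (v · τ)) ≤ W₀ * exp (-k * τ) + M / k :=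
    le_mul_exp_neg_add_div_of_hasDerivAt hk hM hτ0.le
      (fun t ht => hasDerivAt_sqrt_empiricalVariance (hderiv t (hsub ht)) (hVpos t (hsub ht)))
      (fun t ht => empiricalMean_mul_consensus_div_sqrt_le _ _ hM (fun i => hb i t (hsub ht))
        (hVpos t (hsub ht)))
      hV0
  exact (sqrt_lt_sqrt_iff (hVpos τ ⟨hτ0.le, hτT⟩).le).1
    (hdecay.trans_lt (mul_exp_neg_add_div_lt hk hτ0 hW₀ (sqrt_pos.2 hε) hk1 hk2))

theorem stmt_13 (N : ℕ) (hN : 1 ≤ N) (T τ k M ε W₀ : ℝ)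
    (hT : 0 < T) (hτ : τ ∈ Set.Ioc (0 : ℝ) T) (hk : 0 < k) (hM : 0 ≤ M)
    (hε : 0 < ε) (hW₀ : 0 < W₀)
    (v : Fin N → ℝ → ℝ) (h : Fin N → ℝ → ℝ)
    (hv : ∀ i, Differentiable ℝ (v i)) (hh : ∀ i, Continuous (h i))
    (vbar : ℝ → ℝ) (hvbar : ∀ t, vbar t = (1 / (N : ℝ)) * ∑ j, v j t)
    (hode : ∀ i, ∀ t ∈ Set.Icc (0 : ℝ) T, deriv (v i) t = h i t + k * (vbar t - v i t))
    (hb : ∀ i, ∀ t ∈ Set.Icc (0 : ℝ) T, |h i t| ≤ M)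
    (V : ℝ → ℝ) (hV : ∀ t, V t = (1 / (N : ℝ)) * ∑ i, (v i t - vbar t) ^ 2)
    (hVpos : ∀ t ∈ Set.Icc (0 : ℝ) T, 0 < V t)
    (W : ℝ → ℝ) (hW : ∀ t, W t = Real.sqrt (V t)) (hWC1 : ContDiff ℝ 1 W)
    (hV0 : Real.sqrt (V 0) ≤ W₀) (hW₀big : W₀ ≥ 2 * M / k)
    (hk1 : k ≥ 4 * M / Real.sqrt ε)
    (hk2 : k > (1 / τ) * Real.log (2 * W₀ / Real.sqrt ε)) :
    V τ < ε :=
  stmt_13_general N T τ k M ε W₀ hτ hk hM hε hW₀ v h hv vbar hvbar hode hb V hV hVpos hV0 hk1 hk2
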